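/- arXiv:2306.00471 — 2 statements merged into one kernel-verified Lean document; each statement's English description precedes it below -/
import Mathlib

section
/- Let (β,δ) lie in the exponential regime ℰ and let 0 < α < β + δ. Then, as N → ∞, the expected occupation time of the time-rescaled best-class process in the set {1,…,⌊N^α⌋} before extinction, started from ⌊N^α⌋ and given by the Green-function sum Σ_{n=1}^{⌊N^α⌋} G_N(n,n), satisfies ( Σ_{n=1}^{⌊N^α⌋} G_N(n,n) ) / ( 2 N^{α−β} ) → 1. -/
/-!
For `k ≤ N^α ≤ N^{1-δ}` one has `1 - k/N ≥ ρ`, which makes every ratio `p_k/q_k` lie in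
`[1, 1 + 8 N^{-β-δ}]`. Each product in `G_N(n,n)` has at most `N^α` factors and
`N^α · N^{-β-δ} → 0` since `α < β + δ`, so `G_N(n,n) = (1 + o(1)) / q_n` uniformly in
`n ≤ N^α`; and `q_n = (N^β/2)(1 + o(1))` there because `α < 1`. Summing `⌊N^α⌋ ∼ N^α` such terms
gives `2 N^{α-β}`.
-/

open Filter Finset Real Topology

namespace MullerRatchet3

/-- Per-capita upward rate of the time-rescaled best-class process:
`p_n = (1/(2m) + 1/ρ)(1 − n/N)` with `m = N^{−β}`, `ρ = 1 − N^{−δ}`. -/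
noncomputable def pr (β δ : ℝ) (N n : ℕ) : ℝ :=
  (1 / (2 * (N:ℝ)^(-β)) + 1 / (1 - (N:ℝ)^(-δ))) * (1 - (n:ℝ)/(N:ℝ))

/-- Per-capita downward rate `q_n = (1/(2m))(1 − n/N) + 1` with `m = N^{−β}`. -/
noncomputable def qr (β : ℝ) (N n : ℕ) : ℝ :=
  (1 / (2 * (N:ℝ)^(-β))) * (1 - (n:ℝ)/(N:ℝ)) + 1

/-- Green function `G_N(n₀,n) = (1/(n q_n)) Σ_{l=0}^{min(n₀,n)−1} ∏_{k=l+1}^{n−1} p_k/q_k`. -/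
noncomputable def G (β δ : ℝ) (N n₀ n : ℕ) : ℝ :=
  (1 / ((n:ℝ) * qr β N n)) * ∑ l ∈ Finset.range (min n₀ n),
    ∏ k ∈ Finset.Icc (l+1) (n-1), pr β δ N k / qr β N k

/-- The rates `p_k / q_k` written with `b = N^β`, `e = N^{-δ}` and `u = 1 - k/N`. -/
lemma one_le_rate_ratio_le {b e u : ℝ} (hb : 0 < b) (he : e ≤ 1 / 2) (hu : 1 - e ≤ u)
    (hu1 : u ≤ 1) :
    1 ≤ (b / 2 + 1 / (1 - e)) * u / (b / 2 * u + 1) ∧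
      (b / 2 + 1 / (1 - e)) * u / (b / 2 * u + 1) ≤ 1 + 8 * (e / b) := by
  have hρ : 0 < 1 - e := by linarith
  have hq : b / 4 ≤ b / 2 * u + 1 := by nlinarith
  have hq0 : 0 < b / 2 * u + 1 := by linarith
  have hsplit : (b / 2 + 1 / (1 - e)) * u / (b / 2 * u + 1)
      = 1 + (u / (1 - e) - 1) / (b / 2 * u + 1) := by
    rw [one_add_div hq0.ne']
    congr 1
    field_simp
    ring
  have hexcess_nonneg : 0 ≤ u / (1 - e) - 1 := by
    rw [sub_nonneg, le_div_iff₀ hρ]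
    linarith
  have hexcess_le : u / (1 - e) - 1 ≤ 2 * e := by
    rw [sub_le_iff_le_add, div_le_iff₀ hρ]
    nlinarith
  rw [hsplit]
  refine ⟨le_add_of_nonneg_right (div_nonneg hexcess_nonneg hq0.le), ?_⟩
  calc 1 + (u / (1 - e) - 1) / (b / 2 * u + 1) ≤ 1 + 2 * e / (b / 4) := by
        gcongr
        linarith
    _ = 1 + 8 * (e / b) := by ring

lemma sum_range_prod_Icc_bounds {r : ℕ → ℝ} {R : ℝ} {n : ℕ}
    (hr : ∀ k < n, 1 ≤ r k ∧ r k ≤ R) :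
    (n : ℝ) ≤ ∑ l ∈ range n, ∏ k ∈ Icc (l + 1) (n - 1), r k ∧
      ∑ l ∈ range n, ∏ k ∈ Icc (l + 1) (n - 1), r k ≤ n * R ^ n := by
  have hmem : ∀ l k, k ∈ Icc (l + 1) (n - 1) → k < n := fun l k hk => by
    rw [mem_Icc] at hk
    omega
  constructor
  · calc (n : ℝ) = ∑ _l ∈ range n, (1 : ℝ) := by simp
      _ ≤ _ := sum_le_sum fun l _ => one_le_prod fun k hk => (hr k (hmem l k hk)).1
  · calc ∑ l ∈ range n, ∏ k ∈ Icc (l + 1) (n - 1), r k ≤ ∑ _l ∈ range n, R ^ n := by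
          refine sum_le_sum fun l hl => ?_
          obtain ⟨h1, h2⟩ := hr 0 (by have := mem_range.1 hl; omega)
          calc ∏ k ∈ Icc (l + 1) (n - 1), r k ≤ ∏ _k ∈ Icc (l + 1) (n - 1), R :=
                prod_le_prod (fun k hk => zero_le_one.trans (hr k (hmem l k hk)).1)
                  fun k hk => (hr k (hmem l k hk)).2
            _ = R ^ (n - 1 - l) := by rw [prod_const, Nat.card_Icc]; congr 1; omega
            _ ≤ R ^ n := pow_le_pow_right₀ (h1.trans h2) (by omega)
      _ = n * R ^ n := by simp

section Rates

variable (β δ : ℝ) (N : ℕ)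

lemma qr_eq (k : ℕ) : qr β N k = (N : ℝ) ^ β / 2 * (1 - k / N) + 1 := by
  rw [qr, rpow_neg N.cast_nonneg, one_div, mul_inv, inv_inv]
  ring

lemma pr_eq (k : ℕ) :
    pr β δ N k = ((N : ℝ) ^ β / 2 + 1 / (1 - (N : ℝ) ^ (-δ))) * (1 - k / N) := by
  rw [pr, rpow_neg N.cast_nonneg β, one_div (2 * _), mul_inv, inv_inv]
  ring

lemma qr_le (k : ℕ) : qr β N k ≤ (N : ℝ) ^ β / 2 + 1 := by
  rw [qr_eq]
  have : 0 ≤ (N : ℝ) ^ β / 2 := by positivity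
  have : 0 ≤ (k : ℝ) / N := by positivity
  nlinarith

variable {β δ N}

lemma le_qr {α : ℝ} {k : ℕ} (hN : 0 < N) (hk : (k : ℝ) ≤ (N : ℝ) ^ α) :
    (N : ℝ) ^ β / 2 * (1 - (N : ℝ) ^ (α - 1)) ≤ qr β N k := by
  have hN' : (0 : ℝ) < N := Nat.cast_pos.2 hN
  have hkN : (k : ℝ) / N ≤ (N : ℝ) ^ (α - 1) := by
    rw [rpow_sub_one hN'.ne']
    gcongr
  rw [qr_eq]
  have : 0 ≤ (N : ℝ) ^ β / 2 := by positivity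
  nlinarith

lemma one_le_pr_div_qr_le {k : ℕ} (hN : 0 < N) (he : (N : ℝ) ^ (-δ) ≤ 1 / 2)
    (hk : (k : ℝ) ≤ (N : ℝ) ^ (1 - δ)) :
    1 ≤ pr β δ N k / qr β N k ∧ pr β δ N k / qr β N k ≤ 1 + 8 * (N : ℝ) ^ (-β - δ) := by
  have hN' : (0 : ℝ) < N := Nat.cast_pos.2 hN
  have hkN : (k : ℝ) / N ≤ (N : ℝ) ^ (-δ) := by
    rw [div_le_iff₀ hN', ← rpow_add_one hN'.ne']
    simpa [neg_add_eq_sub] using hk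
  have hexp : (N : ℝ) ^ (-β - δ) = (N : ℝ) ^ (-δ) / (N : ℝ) ^ β := by
    rw [sub_eq_neg_add, rpow_add hN', rpow_neg hN'.le β]
    ring
  rw [pr_eq, qr_eq, hexp]
  exact one_le_rate_ratio_le (rpow_pos_of_pos hN' β) he (by linarith)
    (by linarith [div_nonneg k.cast_nonneg hN'.le])

end Rates

section GreenFunction

variable {β δ : ℝ} {N : ℕ}

lemma G_diag_bounds {n : ℕ} {R : ℝ} (hn : 1 ≤ n) (hq : 0 < qr β N n)
    (hr : ∀ k < n, 1 ≤ pr β δ N k / qr β N k ∧ pr β δ N k / qr β N k ≤ R) :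
    1 / qr β N n ≤ G β δ N n n ∧ G β δ N n n ≤ R ^ n / qr β N n := by
  obtain ⟨hlo, hhi⟩ := sum_range_prod_Icc_bounds hr
  have hn' : (0 : ℝ) < n := Nat.cast_pos.2 hn
  have hnq : 0 < (n : ℝ) * qr β N n := mul_pos hn' hq
  rw [G, min_self, one_div_mul_eq_div]
  constructor
  · calc 1 / qr β N n = n / (n * qr β N n) := by field_simp
      _ ≤ _ := by gcongr
  · calc _ ≤ n * R ^ n / (n * qr β N n) := by gcongr
      _ = R ^ n / qr β N n := by field_simp

lemma sum_G_diag_bounds {α : ℝ} (hN : 0 < N) (he : (N : ℝ) ^ (-δ) ≤ 1 / 2)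
    (hx : (N : ℝ) ^ (α - 1) ≤ 1 / 2) (hαδ : α ≤ 1 - δ) :
    (⌊(N : ℝ) ^ α⌋₊ : ℝ) * (1 / ((N : ℝ) ^ β / 2 + 1))
        ≤ ∑ n ∈ Icc 1 ⌊(N : ℝ) ^ α⌋₊, G β δ N n n ∧
      ∑ n ∈ Icc 1 ⌊(N : ℝ) ^ α⌋₊, G β δ N n n
        ≤ ⌊(N : ℝ) ^ α⌋₊ * ((1 + 8 * (N : ℝ) ^ (-β - δ)) ^ ⌊(N : ℝ) ^ α⌋₊
            / ((N : ℝ) ^ β / 2 * (1 - (N : ℝ) ^ (α - 1)))) := by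
  set M := ⌊(N : ℝ) ^ α⌋₊
  have hN' : (0 : ℝ) < N := Nat.cast_pos.2 hN
  have hle : ∀ k ≤ M, (k : ℝ) ≤ (N : ℝ) ^ α := fun k hk =>
    (Nat.cast_le.2 hk).trans (Nat.floor_le (rpow_nonneg hN'.le α))
  have hle' : ∀ k ≤ M, (k : ℝ) ≤ (N : ℝ) ^ (1 - δ) := fun k hk =>
    (hle k hk).trans (rpow_le_rpow_of_exponent_le (Nat.one_le_cast.2 hN) hαδ)
  have hq_lo : 0 < (N : ℝ) ^ β / 2 * (1 - (N : ℝ) ^ (α - 1)) := by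
    have := rpow_pos_of_pos hN' β
    nlinarith
  have hR : 0 ≤ 8 * (N : ℝ) ^ (-β - δ) := by positivity
  have hG : ∀ n ∈ Icc 1 M, 1 / ((N : ℝ) ^ β / 2 + 1) ≤ G β δ N n n ∧
      G β δ N n n ≤ (1 + 8 * (N : ℝ) ^ (-β - δ)) ^ M
        / ((N : ℝ) ^ β / 2 * (1 - (N : ℝ) ^ (α - 1))) := by
    intro n hn
    obtain ⟨hn1, hnM⟩ := mem_Icc.1 hn
    have hq := le_qr (β := β) hN (hle n hnM)
    obtain ⟨hGlo, hGhi⟩ := G_diag_bounds (δ := δ) hn1 (hq_lo.trans_le hq)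
      fun k hk => one_le_pr_div_qr_le hN he (hle' k (by omega))
    constructor
    · calc _ ≤ 1 / qr β N n := by gcongr; exacts [hq_lo.trans_le hq, qr_le β N n]
        _ ≤ _ := hGlo
    · calc _ ≤ _ := hGhi
        _ ≤ _ := by gcongr; linarith
  have hcard : ((Icc 1 M).card : ℝ) = M := by simp
  constructor
  · simpa [hcard] using card_nsmul_le_sum _ _ _ fun n hn => (hG n hn).1
  · simpa [hcard] using sum_le_card_nsmul _ _ _ fun n hn => (hG n hn).2

end GreenFunction

lemma sum_G_diag_div_bounds {β δ α : ℝ} {N : ℕ} (hN : 0 < N) (he : (N : ℝ) ^ (-δ) ≤ 1 / 2)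
    (hx : (N : ℝ) ^ (α - 1) ≤ 1 / 2) (hαδ : α ≤ 1 - δ) :
    ((⌊(N : ℝ) ^ α⌋₊ : ℝ) / (N : ℝ) ^ α) / (1 + 2 * (N : ℝ) ^ (-β))
        ≤ (∑ n ∈ Icc 1 ⌊(N : ℝ) ^ α⌋₊, G β δ N n n) / (2 * (N : ℝ) ^ (α - β)) ∧
      (∑ n ∈ Icc 1 ⌊(N : ℝ) ^ α⌋₊, G β δ N n n) / (2 * (N : ℝ) ^ (α - β))
        ≤ ((⌊(N : ℝ) ^ α⌋₊ : ℝ) / (N : ℝ) ^ α) * (1 + 8 * (N : ℝ) ^ (-β - δ)) ^ ⌊(N : ℝ) ^ α⌋₊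
            / (1 - (N : ℝ) ^ (α - 1)) := by
  obtain ⟨hlo, hhi⟩ := sum_G_diag_bounds (β := β) hN he hx hαδ
  have hN' : (0 : ℝ) < N := Nat.cast_pos.2 hN
  have hb := rpow_pos_of_pos hN' β
  have hNα := rpow_pos_of_pos hN' α
  have hx1 : 0 < 1 - (N : ℝ) ^ (α - 1) := by linarith
  have hscale : 2 * (N : ℝ) ^ (α - β) = 2 * (N : ℝ) ^ α / (N : ℝ) ^ β := by
    rw [rpow_sub hN']
    ring
  rw [hscale]
  constructor
  · calc _ = (⌊(N : ℝ) ^ α⌋₊ : ℝ) * (1 / ((N : ℝ) ^ β / 2 + 1))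
            / (2 * (N : ℝ) ^ α / (N : ℝ) ^ β) := by
          rw [rpow_neg hN'.le]
          field_simp
      _ ≤ _ := by gcongr
  · calc _ ≤ ⌊(N : ℝ) ^ α⌋₊ * ((1 + 8 * (N : ℝ) ^ (-β - δ)) ^ ⌊(N : ℝ) ^ α⌋₊
            / ((N : ℝ) ^ β / 2 * (1 - (N : ℝ) ^ (α - 1)))) / (2 * (N : ℝ) ^ α / (N : ℝ) ^ β) := by
          gcongr
      _ = _ := by field_simp

lemma tendsto_natCast_rpow_atTop_nhds_zero {s : ℝ} (hs : s < 0) :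
    Tendsto (fun N : ℕ => (N : ℝ) ^ s) atTop (𝓝 0) := by
  simpa [Function.comp_def] using
    (tendsto_rpow_neg_atTop (neg_pos.2 hs)).comp tendsto_natCast_atTop_atTop

lemma tendsto_one_add_pow_of_mul_tendsto_zero {ι : Type*} {l : Filter ι} {c : ι → ℝ} {m : ι → ℕ}
    (hc : ∀ i, 0 ≤ c i) (h : Tendsto (fun i => m i * c i) l (𝓝 0)) :
    Tendsto (fun i => (1 + c i) ^ m i) l (𝓝 1) := by
  have hexp : Tendsto (fun i => exp (m i * c i)) l (𝓝 1) := by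
    simpa [Function.comp_def] using (continuous_exp.tendsto 0).comp h
  refine tendsto_of_tendsto_of_tendsto_of_le_of_le tendsto_const_nhds hexp
    (fun i => one_le_pow₀ (le_add_of_nonneg_right (hc i))) fun i => ?_
  calc (1 + c i) ^ m i ≤ exp (c i) ^ m i := by
        gcongr
        · linarith [hc i]
        · linarith [add_one_le_exp (c i)]
    _ = exp (m i * c i) := (exp_nat_mul _ _).symm

lemma tendsto_one_add_mul_rpow_pow_floor {α s C : ℝ} (hC : 0 ≤ C) (hs : α + s < 0) :
    Tendsto (fun N : ℕ => (1 + C * (N : ℝ) ^ s) ^ ⌊(N : ℝ) ^ α⌋₊) atTop (𝓝 1) := by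
  refine tendsto_one_add_pow_of_mul_tendsto_zero (fun N => by positivity) ?_
  refine tendsto_of_tendsto_of_tendsto_of_le_of_le' tendsto_const_nhds
    (by simpa using (tendsto_natCast_rpow_atTop_nhds_zero hs).const_mul C)
    (Eventually.of_forall fun N => by positivity) ?_
  filter_upwards [eventually_gt_atTop 0] with N hN
  have hN' : (0 : ℝ) < N := Nat.cast_pos.2 hN
  calc (⌊(N : ℝ) ^ α⌋₊ : ℝ) * (C * (N : ℝ) ^ s) ≤ (N : ℝ) ^ α * (C * (N : ℝ) ^ s) := by
        gcongr
        exact Nat.floor_le (rpow_nonneg hN'.le α)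
    _ = C * (N : ℝ) ^ (α + s) := by
        rw [rpow_add hN']
        ring

theorem statement3_general (β δ α : ℝ)
    (hβ0 : 0 < β)
    (hδ0 : 0 < δ) (hδ1 : δ < (1 - β)/2)
    (hα0 : 0 < α) (hα1 : α < β + δ) :
    Tendsto (fun N : ℕ =>
        (∑ n ∈ Finset.Icc 1 ⌊(N:ℝ)^α⌋₊, G β δ N n n) / (2 * (N:ℝ)^(α - β)))
      atTop (nhds 1) := by
  have hαδ : α ≤ 1 - δ := by linarith
  have hfloor : Tendsto (fun N : ℕ => (⌊(N : ℝ) ^ α⌋₊ : ℝ) / (N : ℝ) ^ α) atTop (𝓝 1) :=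
    tendsto_nat_floor_div_atTop.comp ((tendsto_rpow_atTop hα0).comp tendsto_natCast_atTop_atTop)
  have hβ := tendsto_natCast_rpow_atTop_nhds_zero (s := -β) (by linarith)
  have hδ := tendsto_natCast_rpow_atTop_nhds_zero (s := -δ) (by linarith)
  have hx := tendsto_natCast_rpow_atTop_nhds_zero (s := α - 1) (by linarith)
  have hlower := hfloor.div (tendsto_const_nhds.add (hβ.const_mul 2))
    (by norm_num : (1 + 2 * 0 : ℝ) ≠ 0)
  have hupper := (hfloor.mul (tendsto_one_add_mul_rpow_pow_floor (C := 8) (by norm_num)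
    (show α + (-β - δ) < 0 by linarith))).div (tendsto_const_nhds.sub hx)
    (by norm_num : (1 - 0 : ℝ) ≠ 0)
  simp only [mul_zero, add_zero, sub_zero, mul_one, div_one] at hlower hupper
  have hbounds := (eventually_gt_atTop 0).and <|
    (hδ.eventually_le_const (by norm_num : (0 : ℝ) < 1 / 2)).and
      (hx.eventually_le_const (by norm_num : (0 : ℝ) < 1 / 2))
  exact tendsto_of_tendsto_of_tendsto_of_le_of_le' hlower hupper
    (hbounds.mono fun N ⟨hN, hδN, hxN⟩ => (sum_G_diag_div_bounds hN hδN hxN hαδ).1)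
    (hbounds.mono fun N ⟨hN, hδN, hxN⟩ => (sum_G_diag_div_bounds hN hδN hxN hαδ).2)

/-- In the exponential regime `ℰ`, for `0 < α < β + δ`,
`Σ_{n=1}^{⌊N^α⌋} G_N(n,n) ∼ 2 N^{α−β}` as `N → ∞`. -/
theorem statement3 (β δ α : ℝ)
    (hβ0 : 0 < β) (hβ1 : β < 1)
    (hδ0 : 0 < δ) (hδ1 : δ < (1 - β)/2)
    (hα0 : 0 < α) (hα1 : α < β + δ) :
    Tendsto (fun N : ℕ =>
        (∑ n ∈ Finset.Icc 1 ⌊(N:ℝ)^α⌋₊, G β δ N n n) / (2 * (N:ℝ)^(α - β)))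
      atTop (nhds 1) :=
  statement3_general β δ α hβ0 hδ0 hδ1 hα0 hα1

end MullerRatchet3
end

section
/- Fix δ ∈ (0,1) and a nonnegative integer k. Then, as the integer N → ∞, the equilibrium weight p_k^{(N,δ)} satisfies p_k^{(N,δ)} · N^{δ/2^k} → 1; moreover, if k ≥ 1, the cumulative weight satisfies ( Σ_{ℓ=0}^{k−1} p_ℓ^{(N,δ)} ) · N^{δ/2^{k−1}} → 1. -/
/-!
Write `ρ = 1 - ε`. The positive root of `x² + a x - q = 0` is homogeneous: scaling `a` by `t` and
`q` by `t²` scales it by `t`. At level `k + 1` the recursion takes `a = -ε + 2 Σ_{ℓ≤k} p_ℓ` and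
`q = (1 - ε) p_k`; if `p_k` and `Σ_{ℓ≤k} p_ℓ` are both `∼ t²`, then `a = o(t)` and `q ∼ t²`, so
by homogeneity and continuity the new root is `∼ t`. Starting from `p_0 = ε`, induction gives
`p_k ∼ Σ_{ℓ≤k} p_ℓ ∼ ε^{1/2^k}`, and `ε = N^{-δ}` yields the theorem.
-/

open Filter Finset Topology

namespace MullerRatchet11

/-- Auxiliary recursion computing the pair `(p_k, Σ_{ℓ≤k} p_ℓ)` of the equilibrium
type-frequency weights of the tournament ratchet:
`p_0 = 1 − ρ` and for `k ≥ 1`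
`p_k = −½(ρ−1+2Σ_{ℓ<k}p_ℓ) + √(¼(ρ−1+2Σ_{ℓ<k}p_ℓ)² + ρ p_{k−1})`. -/
noncomputable def pAux (ρ : ℝ) : ℕ → ℝ × ℝ
  | 0 => (1 - ρ, 1 - ρ)
  | k+1 =>
    let a := ρ - 1 + 2 * (pAux ρ k).2
    let p := -(1/2) * a + Real.sqrt ((1/4) * a^2 + ρ * (pAux ρ k).1)
    (p, (pAux ρ k).2 + p)

/-- The equilibrium weight `p_k^{(ρ)}`. -/
noncomputable def pseq (ρ : ℝ) (k : ℕ) : ℝ := (pAux ρ k).1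

/-- The nonnegative root of `x² + a x - q = 0` when `a² + 4q ≥ 0`. -/
noncomputable def quadRoot (a q : ℝ) : ℝ := -(1 / 2) * a + √((1 / 4) * a ^ 2 + q)

theorem quadRoot_mul_sq {t : ℝ} (ht : 0 ≤ t) (a q : ℝ) :
    quadRoot (t * a) (t ^ 2 * q) = t * quadRoot a q := by
  have h : (1 / 4) * (t * a) ^ 2 + t ^ 2 * q = t ^ 2 * ((1 / 4) * a ^ 2 + q) := by ring
  rw [quadRoot, quadRoot, h, Real.sqrt_mul (sq_nonneg t), Real.sqrt_sq ht]
  ring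

theorem continuous_quadRoot : Continuous fun x : ℝ × ℝ => quadRoot x.1 x.2 := by
  unfold quadRoot
  fun_prop

theorem quadRoot_zero_one : quadRoot 0 1 = 1 := by
  norm_num [quadRoot]

theorem pAux_succ_fst (ρ : ℝ) (k : ℕ) :
    (pAux ρ (k + 1)).1 = quadRoot (ρ - 1 + 2 * (pAux ρ k).2) (ρ * (pAux ρ k).1) :=
  rfl

theorem pAux_succ_snd (ρ : ℝ) (k : ℕ) :
    (pAux ρ (k + 1)).2 = (pAux ρ k).2 + (pAux ρ (k + 1)).1 :=
  rfl

theorem sum_range_succ_pseq (ρ : ℝ) (k : ℕ) :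
    ∑ l ∈ range (k + 1), pseq ρ l = (pAux ρ k).2 := by
  induction k with
  | zero => simp [pseq, pAux]
  | succ k ih => rw [sum_range_succ, ih, pAux_succ_snd, pseq]

theorem tendsto_sq_nhdsGT_zero : Tendsto (fun t : ℝ => t ^ 2) (𝓝[>] 0) (𝓝[>] 0) := by
  refine tendsto_nhdsWithin_iff.2 ⟨?_, ?_⟩
  · simpa using ((continuous_pow 2).tendsto (0 : ℝ)).mono_left nhdsWithin_le_nhds
  · filter_upwards [self_mem_nhdsWithin] with t (ht : 0 < t)
    exact pow_pos ht 2

theorem tendsto_pow_div_self_nhdsGT_zero {n : ℕ} (hn : 1 < n) :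
    Tendsto (fun t : ℝ => t ^ n / t) (𝓝[>] 0) (𝓝 0) := by
  have h : Tendsto (fun t : ℝ => t ^ (n - 1)) (𝓝[>] 0) (𝓝 0) := by
    simpa [zero_pow (by omega : n - 1 ≠ 0)] using
      ((continuous_pow (n - 1)).tendsto (0 : ℝ)).mono_left nhdsWithin_le_nhds
  refine h.congr' ?_
  filter_upwards [self_mem_nhdsWithin] with t (ht : 0 < t)
  rw [eq_div_iff ht.ne', ← pow_succ, Nat.sub_add_cancel (by omega)]

/-- With `ρ = 1 - t^{2^k}`, the scale expected at level `k` is `t` itself, so every exponent in the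
induction stays a natural number. -/
def IsScaledAsymptotic (k : ℕ) : Prop :=
  Tendsto (fun t => (pAux (1 - t ^ 2 ^ k) k).1 / t) (𝓝[>] 0) (𝓝 1) ∧
    Tendsto (fun t => (pAux (1 - t ^ 2 ^ k) k).2 / t) (𝓝[>] 0) (𝓝 1)

theorem isScaledAsymptotic_zero : IsScaledAsymptotic 0 := by
  have h : Tendsto (fun t => (pAux (1 - t ^ 2 ^ 0) 0).1 / t) (𝓝[>] 0) (𝓝 1) := by
    refine tendsto_const_nhds.congr' ?_
    filter_upwards [self_mem_nhdsWithin] with t (ht : 0 < t)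
    simp [pAux, ht.ne']
  exact ⟨h, h⟩

theorem IsScaledAsymptotic.succ {k : ℕ} (hk : IsScaledAsymptotic k) :
    IsScaledAsymptotic (k + 1) := by
  set p := fun t : ℝ => (pAux (1 - t ^ 2 ^ (k + 1)) k).1
  set s := fun t : ℝ => (pAux (1 - t ^ 2 ^ (k + 1)) k).2
  have hpow (t : ℝ) : t ^ 2 ^ (k + 1) = (t ^ 2) ^ 2 ^ k := by rw [pow_succ', pow_mul]
  -- level `k` is read at the scale `t²`
  have hp : Tendsto (fun t => p t / t ^ 2) (𝓝[>] 0) (𝓝 1) := by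
    simpa only [p, hpow, Function.comp_def] using hk.1.comp tendsto_sq_nhdsGT_zero
  have hs : Tendsto (fun t => s t / t ^ 2) (𝓝[>] 0) (𝓝 1) := by
    simpa only [s, hpow, Function.comp_def] using hk.2.comp tendsto_sq_nhdsGT_zero
  have ht : Tendsto (fun t : ℝ => t) (𝓝[>] 0) (𝓝 0) := nhdsWithin_le_nhds
  have hε : Tendsto (fun t : ℝ => t ^ 2 ^ (k + 1) / t) (𝓝[>] 0) (𝓝 0) :=
    tendsto_pow_div_self_nhdsGT_zero (Nat.one_lt_pow (by omega) one_lt_two)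
  have ha : Tendsto (fun t => (1 - t ^ 2 ^ (k + 1) - 1 + 2 * s t) / t) (𝓝[>] 0) (𝓝 0) := by
    have h := hε.neg.add ((hs.const_mul 2).mul ht)
    rw [neg_zero, mul_zero, add_zero] at h
    refine h.congr' ?_
    filter_upwards [self_mem_nhdsWithin] with t (ht : 0 < t)
    field_simp
    ring
  have hq : Tendsto (fun t => (1 - t ^ 2 ^ (k + 1)) * p t / t ^ 2) (𝓝[>] 0) (𝓝 1) := by
    have hρ : Tendsto (fun t : ℝ => 1 - t ^ 2 ^ (k + 1)) (𝓝[>] 0) (𝓝 1) := by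
      simpa using (ht.pow (2 ^ (k + 1))).const_sub 1
    simpa only [mul_div_assoc, one_mul] using hρ.mul hp
  have hp' : Tendsto (fun t => (pAux (1 - t ^ 2 ^ (k + 1)) (k + 1)).1 / t) (𝓝[>] 0) (𝓝 1) := by
    have h := (continuous_quadRoot.tendsto (0, 1)).comp (ha.prodMk_nhds hq)
    rw [quadRoot_zero_one] at h
    refine h.congr' ?_
    filter_upwards [self_mem_nhdsWithin] with t (ht : 0 < t)
    rw [Function.comp_apply, pAux_succ_fst, eq_div_iff ht.ne', mul_comm, ← quadRoot_mul_sq ht.le,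
      mul_div_cancel₀ _ ht.ne', mul_div_cancel₀ _ (pow_ne_zero 2 ht.ne')]
  refine ⟨hp', ?_⟩
  have h := (hs.mul ht).add hp'
  rw [mul_zero, zero_add] at h
  refine h.congr' ?_
  filter_upwards [self_mem_nhdsWithin] with t (ht : 0 < t)
  simp only [pAux_succ_snd, s]
  field_simp

theorem isScaledAsymptotic (k : ℕ) : IsScaledAsymptotic k := by
  induction k with
  | zero => exact isScaledAsymptotic_zero
  | succ k ih => exact ih.succ

theorem tendsto_mul_natCast_rpow_of_tendsto_div {f : ℝ → ℝ} {δ : ℝ} (hδ : 0 < δ) (m : ℕ)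
    (hf : Tendsto (fun t => f (t ^ 2 ^ m) / t) (𝓝[>] 0) (𝓝 1)) :
    Tendsto (fun N : ℕ => f ((N : ℝ) ^ (-δ)) * (N : ℝ) ^ (δ / (2 : ℝ) ^ m)) atTop (𝓝 1) := by
  have hN : Tendsto (fun N : ℕ => (N : ℝ) ^ (-(δ / 2 ^ m))) atTop (𝓝[>] 0) := by
    refine tendsto_nhdsWithin_iff.2
      ⟨(tendsto_rpow_neg_atTop (by positivity)).comp tendsto_natCast_atTop_atTop, ?_⟩
    filter_upwards [eventually_gt_atTop 0] with N hN
    exact Real.rpow_pos_of_pos (Nat.cast_pos.2 hN) _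
  refine (hf.comp hN).congr fun N => ?_
  have hN' : (0 : ℝ) ≤ N := N.cast_nonneg
  have he : -(δ / 2 ^ m) * ((2 ^ m : ℕ) : ℝ) = -δ := by
    push_cast
    field_simp
  rw [Function.comp_apply, ← Real.rpow_mul_natCast hN', he, Real.rpow_neg hN' (δ / 2 ^ m),
    div_inv_eq_mul]

theorem statement11_general (δ : ℝ) (hδ0 : 0 < δ) (k : ℕ) :
    Tendsto (fun N : ℕ =>
        pseq (1 - (N:ℝ)^(-δ)) k * (N:ℝ)^(δ / (2:ℝ)^k)) atTop (nhds 1) ∧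
    (1 ≤ k → Tendsto (fun N : ℕ =>
        (∑ l ∈ Finset.range k, pseq (1 - (N:ℝ)^(-δ)) l) * (N:ℝ)^(δ / (2:ℝ)^(k-1)))
      atTop (nhds 1)) := by
  refine ⟨tendsto_mul_natCast_rpow_of_tendsto_div (f := fun ε => pseq (1 - ε) k) hδ0 k
    (isScaledAsymptotic k).1, fun hk => ?_⟩
  obtain ⟨m, rfl⟩ := Nat.exists_eq_add_of_le' hk
  simp only [Nat.add_sub_cancel, sum_range_succ_pseq]
  exact tendsto_mul_natCast_rpow_of_tendsto_div (f := fun ε => (pAux (1 - ε) m).2) hδ0 m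
    (isScaledAsymptotic m).2

/-- For fixed `δ ∈ (0,1)` and `k`, as `N → ∞`:
`p_k^{(N,δ)} ∼ N^{−δ/2^k}` and, for `k ≥ 1`, `Σ_{ℓ<k} p_ℓ^{(N,δ)} ∼ N^{−δ/2^{k−1}}`. -/
theorem statement11 (δ : ℝ) (hδ0 : 0 < δ) (hδ1 : δ < 1) (k : ℕ) :
    Tendsto (fun N : ℕ =>
        pseq (1 - (N:ℝ)^(-δ)) k * (N:ℝ)^(δ / (2:ℝ)^k)) atTop (nhds 1) ∧
    (1 ≤ k → Tendsto (fun N : ℕ =>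
        (∑ l ∈ Finset.range k, pseq (1 - (N:ℝ)^(-δ)) l) * (N:ℝ)^(δ / (2:ℝ)^(k-1)))
      atTop (nhds 1)) :=
  statement11_general δ hδ0 k

end MullerRatchet11
end
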